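/- Let p be a prime, k ≥ 2, e_1, ..., e_k ≥ 0 integers, and b_1, b'_1, ..., b_k, b'_k ∈ Z. Then Σ_{c_1=1}^{p^{e_1}} ... Σ_{c_k=1}^{p^{e_k}} Π_{i=1}^{k-1} |c_i p^{b_i} + c_{i+1} p^{b'_{i+1}}|_p^{-1/2} ≤ A_k · (Π_{i=1}^{k} max(e_i, 1)) · p^{Σ_{i=1}^{k} e_i + (1/2) Σ_{i=1}^{k-1} min(b_i, b'_{i+1})} for a constant A_k depending only on k. -/

import Mathlib

/-!
Write `F_i(c) = |c_i p^{b_i} + c_{i+1} p^{b'_{i+1}}|_p^{-1}`. Splitting the edges of the path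
`0 - 1 - ⋯ - (K+1)` into even and odd ones, `∏ √F_i = √(∏_even F_i) · √(∏_odd F_i)`, and
Cauchy–Schwarz bounds the sum by `√(∑ ∏_even F_i) · √(∑ ∏_odd F_i)`. Edges of one parity are
pairwise disjoint, so each of these sums factors into sums over single pairs `(c_i, c_{i+1})`
and the sizes of the unpaired ranges. For one pair, after pulling out `p^{min}` one needs
`∑_{x ≤ p^e, y ≤ p^{e'}} p^{v_p(x + y p^β)} ≪ (e + e' + 2) p^{e + e'}`; this follows from
`#{(x, y) : p^j ∣ x + y p^β} · p^j ≤ 2 p^{e + e'}`, which in turn bounds the valuation by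
`e + e' + 1`.
-/

open Finset Fintype

theorem Fin.sum_piFinset_succ {β : Type*} [AddCommMonoid β] {n : ℕ} {α : Fin (n + 1) → Type*}
    (S : ∀ i, Finset (α i)) (f : (∀ i, α i) → β) :
    ∑ r ∈ piFinset S, f r = ∑ x ∈ S 0, ∑ r ∈ piFinset (Fin.tail S), f (Fin.cons x r) := by
  rw [← sum_product']
  exact sum_equiv (Fin.consEquiv α).symm (fun r => by simp [Fin.forall_fin_succ, Fin.tail])
    (fun r _ => by simp)

theorem Finset.prod_ite_one_mul_prod_ite_not_one {ι M : Type*} [CommMonoid M] (s : Finset ι)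
    (p : ι → Prop) [DecidablePred p] (f : ι → M) :
    (∏ i ∈ s, if p i then f i else 1) * (∏ i ∈ s, if ¬ p i then f i else 1) = ∏ i ∈ s, f i := by
  rw [← prod_mul_distrib]
  exact prod_congr rfl fun i _ => by split_ifs <;> simp

section PathSum

variable {R α : Type*} {n : ℕ}

section CommSemiring

variable [CommSemiring R]

def pathSum (t : Fin (n + 1) → Finset α) (g : Fin n → α → α → R) : R :=
  ∑ c ∈ piFinset t, ∏ i, g i (c i.castSucc) (c i.succ)

theorem pathSum_zero (t : Fin 1 → Finset α) (g : Fin 0 → α → α → R) : pathSum t g = #(t 0) := by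
  simp [pathSum, Fin.sum_piFinset_succ t]

theorem pathSum_succ (t : Fin (n + 2) → Finset α) (g : Fin (n + 1) → α → α → R) :
    pathSum t g = ∑ x ∈ t 0, ∑ d ∈ piFinset (Fin.tail t),
      g 0 x (d 0) * ∏ i : Fin n, g i.succ (d i.castSucc) (d i.succ) := by
  simp [pathSum, Fin.sum_piFinset_succ t, Fin.prod_univ_succ]

theorem pathSum_one (t : Fin 2 → Finset α) (g : Fin 1 → α → α → R) :
    pathSum t g = ∑ x ∈ t 0, ∑ y ∈ t 1, g 0 x y := by
  simp [pathSum_succ, Fin.sum_piFinset_succ (Fin.tail t), Fin.tail]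

theorem pathSum_succ_of_eq_one (t : Fin (n + 2) → Finset α) (g : Fin (n + 1) → α → α → R)
    (hg : ∀ x y, g 0 x y = 1) :
    pathSum t g = #(t 0) * pathSum (Fin.tail t) (fun i => g i.succ) := by
  rw [pathSum_succ]
  simp [hg, pathSum]

theorem pathSum_succ_succ_of_eq_one (t : Fin (n + 3) → Finset α) (g : Fin (n + 2) → α → α → R)
    (hg : ∀ x y, g 1 x y = 1) :
    pathSum t g = (∑ x ∈ t 0, ∑ y ∈ t 1, g 0 x y) *
      pathSum (Fin.tail (Fin.tail t)) (fun i => g i.succ.succ) := by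
  rw [pathSum_succ, pathSum, sum_mul]
  refine sum_congr rfl fun x _ => ?_
  rw [Fin.sum_piFinset_succ, sum_mul]
  refine sum_congr rfl fun y _ => ?_
  simp [Fin.prod_univ_succ, hg, mul_sum]

end CommSemiring

variable [CommSemiring R] [PartialOrder R] [IsOrderedRing R]

theorem pathSum_nonneg (t : Fin (n + 1) → Finset α) (g : Fin n → α → α → R)
    (hg : ∀ i x y, 0 ≤ g i x y) : 0 ≤ pathSum t g :=
  sum_nonneg fun _ _ => prod_nonneg fun _ _ => hg _ _ _

theorem pathSum_le (s : ℕ → Prop) [DecidablePred s] (hs : ∀ i, s i → ¬ s (i + 1))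
    (t : Fin (n + 1) → Finset α) (g : Fin n → α → α → R) (κ : Fin (n + 1) → R) (μ : Fin n → R)
    (hg : ∀ i x y, 0 ≤ g i x y) (hg_one : ∀ i : Fin n, ¬ s i → ∀ x y, g i x y = 1)
    (ht : ∀ j, (#(t j) : R) ≤ κ j)
    (hpair : ∀ i : Fin n, s i →
      ∑ x ∈ t i.castSucc, ∑ y ∈ t i.succ, g i x y ≤ κ i.castSucc * κ i.succ * μ i) :
    pathSum t g ≤ (∏ j, κ j) * ∏ i : Fin n, if s i then μ i else 1 := by
  induction n using Nat.strong_induction_on generalizing s with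
  | _ n ih =>
  rcases n with _ | n
  · simpa [pathSum_zero] using ht 0
  rw [Fin.prod_univ_succ κ, Fin.prod_univ_succ (fun i : Fin (n + 1) => if s i then μ i else 1)]
  by_cases h0 : s 0
  · rcases n with _ | n
    · simpa [pathSum_one, h0] using hpair 0 h0
    have hrest := ih n (by omega) (fun k => s (k + 2)) (fun i h => hs _ h) (Fin.tail (Fin.tail t))
      (fun i => g i.succ.succ) (Fin.tail (Fin.tail κ)) (fun i => μ i.succ.succ)
      (fun _ _ _ => hg _ _ _) (fun i hi => hg_one _ hi) (fun j => ht _)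
      (fun i hi => hpair i.succ.succ hi)
    have hpair_nonneg : 0 ≤ ∑ x ∈ t 0, ∑ y ∈ t 1, g 0 x y :=
      sum_nonneg fun _ _ => sum_nonneg fun _ _ => hg _ _ _
    rw [pathSum_succ_succ_of_eq_one t g (hg_one 1 (hs 0 h0))]
    refine (mul_le_mul (hpair 0 h0) hrest (pathSum_nonneg _ _ fun _ _ _ => hg _ _ _)
      (hpair_nonneg.trans (hpair 0 h0))).trans_eq ?_
    simp [h0, hs 0 h0, Fin.tail, Fin.prod_univ_succ]
    ring
  · have hrest := ih n (by omega) (fun k => s (k + 1)) (fun i h => hs _ h) (Fin.tail t)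
      (fun i => g i.succ) (Fin.tail κ) (fun i => μ i.succ) (fun _ _ _ => hg _ _ _)
      (fun i hi => hg_one _ hi) (fun j => ht _) (fun i hi => hpair i.succ hi)
    rw [pathSum_succ_of_eq_one t g (hg_one 0 h0), mul_assoc]
    simp only [Fin.val_zero, h0, if_false, one_mul]
    exact mul_le_mul (ht 0) hrest (pathSum_nonneg _ _ fun _ _ _ => hg _ _ _)
      ((Nat.cast_nonneg _).trans (ht 0))

end PathSum

theorem pathSum_sqrt_le {α : Type*} {n : ℕ} (t : Fin (n + 1) → Finset α)
    (F : Fin n → α → α → ℝ) (κ : Fin (n + 1) → ℝ) (μ : Fin n → ℝ)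
    (hF : ∀ i x y, 0 ≤ F i x y) (hμ : ∀ i, 0 ≤ μ i) (ht : ∀ j, (#(t j) : ℝ) ≤ κ j)
    (hpair : ∀ i : Fin n,
      ∑ x ∈ t i.castSucc, ∑ y ∈ t i.succ, F i x y ≤ κ i.castSucc * κ i.succ * μ i) :
    pathSum t (fun i x y => √(F i x y)) ≤ (∏ j, κ j) * √(∏ i, μ i) := by
  have hF_ite : ∀ (s : ℕ → Prop) [DecidablePred s] (i : Fin n) x y,
      0 ≤ if s i then F i x y else 1 :=
    fun s _ i x y => by split_ifs <;> simp [hF]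
  have hbound : ∀ (s : ℕ → Prop) [DecidablePred s], (∀ i, s i → ¬ s (i + 1)) →
      pathSum t (fun (i : Fin n) x y => if s i then F i x y else 1) ≤
        (∏ j, κ j) * ∏ i : Fin n, if s i then μ i else 1 := fun s _ hs =>
    pathSum_le s hs t _ κ μ (hF_ite s) (fun i hi x y => if_neg hi) ht
      (fun i hi => by simpa [hi] using hpair i)
  have hκ : 0 ≤ ∏ j, κ j := prod_nonneg fun j _ => (Nat.cast_nonneg _).trans (ht j)
  calc pathSum t (fun i x y => √(F i x y))
      = ∑ c ∈ piFinset t,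
          √(∏ i : Fin n, if Even (i : ℕ) then F i (c i.castSucc) (c i.succ) else 1) *
          √(∏ i : Fin n, if ¬ Even (i : ℕ) then F i (c i.castSucc) (c i.succ) else 1) := by
        refine sum_congr rfl fun c _ => ?_
        rw [← Real.sqrt_mul (prod_nonneg fun i _ => hF_ite _ _ _ _),
          prod_ite_one_mul_prod_ite_not_one, Real.sqrt_prod _ fun i _ => hF _ _ _]
    _ ≤ √(pathSum t (fun (i : Fin n) x y => if Even (i : ℕ) then F i x y else 1)) *
          √(pathSum t (fun (i : Fin n) x y => if ¬ Even (i : ℕ) then F i x y else 1)) :=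
        Real.sum_sqrt_mul_sqrt_le _ (fun c => prod_nonneg fun i _ => hF_ite _ _ _ _)
          (fun c => prod_nonneg fun i _ => hF_ite (fun k => ¬ Even k) _ _ _)
    _ ≤ √((∏ j, κ j) * ∏ i : Fin n, if Even (i : ℕ) then μ i else 1) *
        √((∏ j, κ j) * ∏ i : Fin n, if ¬ Even (i : ℕ) then μ i else 1) := by
        gcongr
        · exact hbound Even fun i hi => Nat.not_even_iff_odd.mpr hi.add_one
        · exact hbound (fun k => ¬ Even k) fun i hi => by simpa [Nat.even_add_one] using hi
    _ = (∏ j, κ j) * √(∏ i, μ i) := by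
        rw [← Real.sqrt_mul (mul_nonneg hκ (prod_nonneg fun i _ => by split_ifs <;> simp [hμ])),
          mul_mul_mul_comm, prod_ite_one_mul_prod_ite_not_one, Real.sqrt_mul (mul_self_nonneg _),
          Real.sqrt_mul_self hκ]

theorem card_filter_dvd_add_mul_le_mul_add (A B r : ℕ) :
    #{ab ∈ Icc 1 A ×ˢ Icc 1 B | r ∣ ab.1 + ab.2} * r ≤ A * (A + B) := by
  rcases Nat.eq_zero_or_pos r with rfl | hr
  · simp
  have hcard : #{ab ∈ Icc 1 A ×ˢ Icc 1 B | r ∣ ab.1 + ab.2} ≤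
      #(Icc 1 A ×ˢ Icc 1 ((A + B) / r)) := by
    refine card_le_card_of_injOn (fun ab => (ab.1, (ab.1 + ab.2) / r)) ?_ ?_
    · intro ab hab
      simp only [coe_filter, mem_product, mem_Icc, Set.mem_ofPred_eq, coe_product, coe_Icc,
        Set.mem_prod, Set.mem_Icc] at hab ⊢
      exact ⟨hab.1.1, (Nat.one_le_div_iff hr).2 (Nat.le_of_dvd (by omega) hab.2),
        Nat.div_le_div_right (by omega)⟩
    · intro ab hab cd hcd h
      simp only [coe_filter, mem_product, Set.mem_ofPred_eq, Prod.mk.injEq] at hab hcd h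
      have := (Nat.div_left_inj hab.2 hcd.2).1 h.2
      ext <;> omega
  calc #{ab ∈ Icc 1 A ×ˢ Icc 1 B | r ∣ ab.1 + ab.2} * r ≤ A * ((A + B) / r) * r := by
        simpa using Nat.mul_le_mul_right r hcard
    _ ≤ A * (A + B) := by rw [mul_assoc]; exact Nat.mul_le_mul_left A (Nat.div_mul_le_self _ _)

theorem card_filter_dvd_add_mul_le (A B r : ℕ) :
    #{ab ∈ Icc 1 A ×ˢ Icc 1 B | r ∣ ab.1 + ab.2} * r ≤ 2 * A * B := by
  wlog hAB : A ≤ B generalizing A B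
  · have hswap : #{ab ∈ Icc 1 A ×ˢ Icc 1 B | r ∣ ab.1 + ab.2} =
        #{ab ∈ Icc 1 B ×ˢ Icc 1 A | r ∣ ab.1 + ab.2} :=
      card_equiv (Equiv.prodComm ℕ ℕ) fun ab => by simp [add_comm, and_comm]
    rw [hswap]
    linarith [this B A (by omega)]
  nlinarith [card_filter_dvd_add_mul_le_mul_add A B r]

theorem card_filter_dvd_add_mul_mul_le (X Y q m : ℕ) (hqm : q ∣ m ∨ m ∣ q) :
    #{xy ∈ Icc 1 X ×ˢ Icc 1 Y | m ∣ xy.1 + xy.2 * q} * m ≤ 2 * X * Y := by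
  rcases hqm with hqm | hmq
  · rcases Nat.eq_zero_or_pos q with rfl | hq
    · obtain rfl := zero_dvd_iff.1 hqm
      simp
    -- `q ∣ x` on this set, so substituting `x = a q` reduces to the case `q = 1`.
    have hsub : {xy ∈ Icc 1 X ×ˢ Icc 1 Y | m ∣ xy.1 + xy.2 * q} ⊆
        ({ab ∈ Icc 1 (X / q) ×ˢ Icc 1 Y | m / q ∣ ab.1 + ab.2}).image
          (fun ab => (ab.1 * q, ab.2)) := by
      intro xy hxy
      simp only [mem_filter, mem_product, mem_Icc] at hxy
      have hqx : q ∣ xy.1 := (Nat.dvd_add_left (dvd_mul_left q xy.2)).1 (hqm.trans hxy.2)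
      refine mem_image.2 ⟨(xy.1 / q, xy.2), ?_, by simp [Nat.div_mul_cancel hqx]⟩
      simp only [mem_filter, mem_product, mem_Icc]
      refine ⟨⟨⟨(Nat.one_le_div_iff hq).2 (Nat.le_of_dvd (by omega) hqx),
        Nat.div_le_div_right hxy.1.1.2⟩, hxy.1.2⟩, Nat.dvd_of_mul_dvd_mul_right hq ?_⟩
      rw [Nat.div_mul_cancel hqm, add_mul, Nat.div_mul_cancel hqx]
      exact hxy.2
    calc #{xy ∈ Icc 1 X ×ˢ Icc 1 Y | m ∣ xy.1 + xy.2 * q} * m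
        ≤ #{ab ∈ Icc 1 (X / q) ×ˢ Icc 1 Y | m / q ∣ ab.1 + ab.2} * (m / q) * q := by
          rw [mul_assoc, Nat.div_mul_cancel hqm]
          exact Nat.mul_le_mul_right m ((card_le_card hsub).trans card_image_le)
      _ ≤ 2 * (X / q) * Y * q := Nat.mul_le_mul_right q (card_filter_dvd_add_mul_le _ _ _)
      _ ≤ 2 * X * Y := by nlinarith [Nat.div_mul_le_self X q]
  · have hfilter : {xy ∈ Icc 1 X ×ˢ Icc 1 Y | m ∣ xy.1 + xy.2 * q} =
        {x ∈ Ioc 0 X | m ∣ x} ×ˢ Icc 1 Y := by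
      rw [← filter_product_left]
      exact filter_congr fun xy _ => Nat.dvd_add_left (hmq.mul_left xy.2)
    rw [hfilter, card_product, Nat.Ioc_filter_dvd_card_eq_div, Nat.card_Icc, Nat.add_sub_cancel,
      mul_right_comm]
    nlinarith [Nat.div_mul_le_self X m]

theorem padicValNat_add_mul_pow_le {p e e' β x y : ℕ} (hp : 1 < p) (hx : x ∈ Icc 1 (p ^ e))
    (hy : y ∈ Icc 1 (p ^ e')) : padicValNat p (x + y * p ^ β) ≤ e + e' + 1 := by
  set v := padicValNat p (x + y * p ^ β)
  have hmem : (x, y) ∈ {xy ∈ Icc 1 (p ^ e) ×ˢ Icc 1 (p ^ e') | p ^ v ∣ xy.1 + xy.2 * p ^ β} :=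
    mem_filter.2 ⟨mem_product.2 ⟨hx, hy⟩, pow_padicValNat_dvd⟩
  refine (Nat.pow_le_pow_iff_right hp).1 ?_
  calc p ^ v ≤ #{xy ∈ Icc 1 (p ^ e) ×ˢ Icc 1 (p ^ e') | p ^ v ∣ xy.1 + xy.2 * p ^ β} * p ^ v :=
        Nat.le_mul_of_pos_left _ (card_pos.2 ⟨_, hmem⟩)
    _ ≤ 2 * p ^ e * p ^ e' :=
        card_filter_dvd_add_mul_mul_le _ _ _ _ ((le_total β v).imp (pow_dvd_pow p) (pow_dvd_pow p))
    _ ≤ p ^ (e + e' + 1) := by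
        rw [pow_succ, pow_add, mul_assoc, mul_comm]
        exact Nat.mul_le_mul_left _ hp

theorem sum_pow_padicValNat_add_mul_pow_le {p : ℕ} (hp : 1 < p) (e e' β : ℕ) :
    ∑ x ∈ Icc 1 (p ^ e), ∑ y ∈ Icc 1 (p ^ e'), p ^ padicValNat p (x + y * p ^ β) ≤
      2 * (e + e' + 2) * p ^ e * p ^ e' := by
  rw [← sum_product']
  calc ∑ xy ∈ Icc 1 (p ^ e) ×ˢ Icc 1 (p ^ e'), p ^ padicValNat p (xy.1 + xy.2 * p ^ β)
      ≤ ∑ xy ∈ Icc 1 (p ^ e) ×ˢ Icc 1 (p ^ e'), ∑ j ∈ range (e + e' + 2),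
          if p ^ j ∣ xy.1 + xy.2 * p ^ β then p ^ j else 0 := by
        refine sum_le_sum fun xy hxy => ?_
        obtain ⟨hx, hy⟩ := mem_product.1 hxy
        have hv := padicValNat_add_mul_pow_le (β := β) hp hx hy
        convert single_le_sum (f := fun j => if p ^ j ∣ xy.1 + xy.2 * p ^ β then p ^ j else 0)
          (fun j _ => Nat.zero_le _) (mem_range.2 (Nat.lt_succ_of_le hv)) using 1
        simp [pow_padicValNat_dvd]
    _ = ∑ j ∈ range (e + e' + 2),
          #{xy ∈ Icc 1 (p ^ e) ×ˢ Icc 1 (p ^ e') | p ^ j ∣ xy.1 + xy.2 * p ^ β} * p ^ j := by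
        rw [sum_comm]
        simp only [← sum_filter, sum_const, smul_eq_mul]
    _ ≤ ∑ j ∈ range (e + e' + 2), 2 * p ^ e * p ^ e' :=
        sum_le_sum fun j _ => card_filter_dvd_add_mul_mul_le _ _ _ _
          ((le_total β j).imp (pow_dvd_pow p) (pow_dvd_pow p))
    _ = 2 * (e + e' + 2) * p ^ e * p ^ e' := by rw [sum_const, card_range, smul_eq_mul]; ring

section Padic

variable {p : ℕ} [hp : Fact p.Prime]

theorem Padic.norm_natCast_of_ne_zero {n : ℕ} (hn : n ≠ 0) :
    ‖(n : ℚ_[p])‖ = (p : ℝ) ^ (-(padicValNat p n : ℤ)) := by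
  rw [Padic.norm_eq_zpow_neg_valuation (Nat.cast_ne_zero.2 hn), Padic.valuation_natCast]

theorem Padic.inv_norm_natCast_mul_zpow_add_natCast_mul_zpow (x y β : ℕ) (b : ℤ) (hx : x ≠ 0) :
    ‖(x : ℚ_[p]) * (p : ℚ_[p]) ^ b + (y : ℚ_[p]) * (p : ℚ_[p]) ^ (b + β)‖⁻¹ =
      (p : ℝ) ^ b * (p : ℝ) ^ padicValNat p (x + y * p ^ β) := by
  have hp0 : (p : ℚ_[p]) ≠ 0 := Nat.cast_ne_zero.2 hp.out.ne_zero
  have h : (x : ℚ_[p]) * (p : ℚ_[p]) ^ b + (y : ℚ_[p]) * (p : ℚ_[p]) ^ (b + β) =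
      (p : ℚ_[p]) ^ b * ((x + y * p ^ β : ℕ) : ℚ_[p]) := by
    rw [zpow_add₀ hp0, zpow_natCast]; push_cast; ring
  rw [h, norm_mul, Padic.norm_p_zpow, Padic.norm_natCast_of_ne_zero (by omega), mul_inv,
    ← zpow_neg, ← zpow_neg, neg_neg, neg_neg, zpow_natCast]

theorem Padic.sum_inv_norm_natCast_mul_zpow_add_le (e e' : ℕ) (b b' : ℤ) :
    ∑ x ∈ Icc 1 (p ^ e), ∑ y ∈ Icc 1 (p ^ e'),
        ‖(x : ℚ_[p]) * (p : ℚ_[p]) ^ b + (y : ℚ_[p]) * (p : ℚ_[p]) ^ b'‖⁻¹ ≤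
      (4 * max (e : ℝ) 1 * (p : ℝ) ^ e) * (4 * max (e' : ℝ) 1 * (p : ℝ) ^ e') *
        (p : ℝ) ^ min b b' := by
  wlog hb : b ≤ b' generalizing e e' b b'
  · calc _ = ∑ y ∈ Icc 1 (p ^ e'), ∑ x ∈ Icc 1 (p ^ e),
            ‖(y : ℚ_[p]) * (p : ℚ_[p]) ^ b' + (x : ℚ_[p]) * (p : ℚ_[p]) ^ b‖⁻¹ := by
          rw [sum_comm]
          exact sum_congr rfl fun _ _ => sum_congr rfl fun _ _ => by rw [add_comm]
      _ ≤ _ := this e' e b' b (by omega)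
      _ = _ := by rw [min_comm]; ring
  obtain ⟨β, rfl⟩ : ∃ β : ℕ, b' = b + β := ⟨(b' - b).toNat, by omega⟩
  have hcore : ∑ x ∈ Icc 1 (p ^ e), ∑ y ∈ Icc 1 (p ^ e'),
      (p : ℝ) ^ padicValNat p (x + y * p ^ β) ≤ 2 * (e + e' + 2) * (p : ℝ) ^ e * (p : ℝ) ^ e' := by
    exact_mod_cast sum_pow_padicValNat_add_mul_pow_le hp.out.one_lt e e' β
  have hconst : 2 * ((e : ℝ) + e' + 2) ≤ 4 * max (e : ℝ) 1 * (4 * max (e' : ℝ) 1) := by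
    nlinarith [le_max_left (e : ℝ) 1, le_max_right (e : ℝ) 1, le_max_left (e' : ℝ) 1,
      le_max_right (e' : ℝ) 1]
  have hpR : (0 : ℝ) < p := Nat.cast_pos.2 hp.out.pos
  calc ∑ x ∈ Icc 1 (p ^ e), ∑ y ∈ Icc 1 (p ^ e'),
        ‖(x : ℚ_[p]) * (p : ℚ_[p]) ^ b + (y : ℚ_[p]) * (p : ℚ_[p]) ^ (b + β)‖⁻¹
      = (p : ℝ) ^ b * ∑ x ∈ Icc 1 (p ^ e), ∑ y ∈ Icc 1 (p ^ e'),
          (p : ℝ) ^ padicValNat p (x + y * p ^ β) := by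
        rw [mul_sum]
        refine sum_congr rfl fun x hx => ?_
        rw [mul_sum]
        have hx0 : x ≠ 0 := by simp only [mem_Icc] at hx; omega
        exact sum_congr rfl fun y _ => inv_norm_natCast_mul_zpow_add_natCast_mul_zpow x y β b hx0
    _ ≤ (p : ℝ) ^ b * (2 * (e + e' + 2) * (p : ℝ) ^ e * (p : ℝ) ^ e') := by gcongr
    _ ≤ _ := by
        rw [min_eq_left (by omega)]
        have : 0 < (p : ℝ) ^ b * ((p : ℝ) ^ e * (p : ℝ) ^ e') := by positivity
        nlinarith

end Padic

/-- Lemma 3 of the paper: for k = K+2 ≥ 2 variables, the nested sum of products of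
p-adic absolute values is bounded by A_k · (Π max(e_i,1)) · p^{Σ e_i + ½ Σ min(b_i, b'_{i+1})}. -/
theorem nested_weil_sum_bound (K : ℕ) :
    ∃ A : ℝ, 0 < A ∧
      ∀ (p : ℕ) [Fact p.Prime] (e : Fin (K + 2) → ℕ) (b b' : Fin (K + 2) → ℤ),
        (∑ c ∈ Fintype.piFinset (fun i : Fin (K + 2) => Finset.Icc 1 (p ^ e i)),
            ∏ i : Fin (K + 1),
              ‖(c i.castSucc : ℚ_[p]) * (p : ℚ_[p]) ^ (b i.castSucc) +
                (c i.succ : ℚ_[p]) * (p : ℚ_[p]) ^ (b' i.succ)‖ ^ (-(1 / 2) : ℝ)) ≤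
          A * (∏ i : Fin (K + 2), (max (e i) 1 : ℝ)) *
            (p : ℝ) ^ ((∑ i : Fin (K + 2), (e i : ℝ)) +
              (1 / 2) * ∑ i : Fin (K + 1), (min (b i.castSucc) (b' i.succ) : ℝ)) := by
  refine ⟨4 ^ (K + 2), by positivity, fun p _ e b b' => ?_⟩
  have hpR : (0 : ℝ) < p := Nat.cast_pos.2 (Fact.out : p.Prime).pos
  have hterm : ∀ z : ℚ_[p], ‖z‖ ^ (-(1 / 2) : ℝ) = √‖z‖⁻¹ := fun z => by
    rw [Real.sqrt_eq_rpow, Real.inv_rpow (norm_nonneg _), ← Real.rpow_neg (norm_nonneg _)]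
  simp_rw [hterm]
  refine (pathSum_sqrt_le _ (fun i (x y : ℕ) =>
      ‖(x : ℚ_[p]) * (p : ℚ_[p]) ^ b i.castSucc + (y : ℚ_[p]) * (p : ℚ_[p]) ^ b' i.succ‖⁻¹)
    (fun j => 4 * max (e j : ℝ) 1 * (p : ℝ) ^ e j)
    (fun i => (p : ℝ) ^ ((min (b i.castSucc) (b' i.succ) : ℤ) : ℝ))
    (fun _ _ _ => inv_nonneg.2 (norm_nonneg _)) (fun _ => (Real.rpow_pos_of_pos hpR _).le)
    (fun j => ?_) (fun i => ?_)).trans_eq ?_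
  · rw [Nat.card_Icc, Nat.add_sub_cancel]
    push_cast
    nlinarith [le_max_right (e j : ℝ) 1, pow_pos hpR (e j)]
  · rw [Real.rpow_intCast]
    exact Padic.sum_inv_norm_natCast_mul_zpow_add_le _ _ _ _
  · rw [prod_mul_distrib, prod_mul_distrib, prod_const, card_univ, Fintype.card_fin,
      prod_pow_eq_pow_sum, ← Real.rpow_sum_of_pos hpR, Real.sqrt_eq_rpow, ← Real.rpow_mul hpR.le,
      Real.rpow_add hpR, ← Nat.cast_sum, Real.rpow_natCast]
    push_cast
    ring_nf
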